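/- arXiv:0707.4261 — 4 statements merged into one kernel-verified Lean document; each statement's English description precedes it below -/
import Mathlib

section
/- Let t be a nonzero rational number and x a rational number. Then the arithmetic progression {x + n·t : n ∈ ℤ} is an open subset of ℚ when ℚ is given the subspace topology induced by its diagonal embedding into the finite adele ring 𝔸_{ℚ,f}. -/
/-!
An element of `K` that is integral at every finite place lies in `R`, so `x + R·t` is the preimage
of the open set `∏ᵥ R_v` of integral finite adeles under the continuous affine map
`a ↦ t⁻¹ (a - x)` of `𝔸ᶠ[R, K]`.
-/

open IsDedekindDomain IsDedekindDomain.HeightOneSpectrum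

namespace IsDedekindDomain.FiniteAdeleRing

variable {R K : Type*} [CommRing R] [IsDedekindDomain R] [Field K] [Algebra R K]
  [IsFractionRing R K]

theorem isOpen_setOf_forall_mem_adicCompletionIntegers :
    IsOpen {a : FiniteAdeleRing R K | ∀ v, a v ∈ v.adicCompletionIntegers K} :=
  RestrictedProduct.isOpen_forall_mem fun _ => Valued.isOpen_valuationSubring _

theorem algebraMap_mem_adicCompletionIntegers_iff (k : K) :
    (∀ v, algebraMap K (FiniteAdeleRing R K) k v ∈ v.adicCompletionIntegers K) ↔
      k ∈ (algebraMap R K).range := by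
  simp only [algebraMap_apply, mem_adicCompletionIntegers, valuedAdicCompletion_eq_valuation']
  refine ⟨mem_integers_of_valuation_le_one K k, ?_⟩
  rintro ⟨r, rfl⟩ v
  exact v.valuation_le_one r

theorem isOpen_setOf_add_mul_induced {t : K} (ht : t ≠ 0) (x : K) :
    @IsOpen K (.induced (algebraMap K (FiniteAdeleRing R K)) inferInstance)
      {y : K | ∃ r : R, y = x + algebraMap R K r * t} := by
  let f : FiniteAdeleRing R K → FiniteAdeleRing R K :=
    fun a => algebraMap K _ t⁻¹ * (a - algebraMap K _ x)
  have hf : Continuous f := by fun_prop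
  convert isOpen_induced (hf.isOpen_preimage _ isOpen_setOf_forall_mem_adicCompletionIntegers)
  ext y
  simp only [Set.mem_ofPred_eq, Set.mem_preimage, f, ← map_sub, ← map_mul,
    algebraMap_mem_adicCompletionIntegers_iff, RingHom.mem_range]
  refine exists_congr fun r => ?_
  rw [eq_comm, eq_inv_mul_iff_mul_eq₀ ht, eq_sub_iff_add_eq', mul_comm t]

end IsDedekindDomain.FiniteAdeleRing

open IsDedekindDomain in
/-- For a nonzero rational `t` and a rational `x`, the arithmetic progression
`{x + n·t : n ∈ ℤ}` is open in `ℚ` for the subspace topology induced by the diagonal embedding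
of `ℚ` into the finite adele ring `𝔸_{ℚ,f}`. -/
theorem arithProgression_isOpen_adelicTopology (t : ℚ) (ht : t ≠ 0) (x : ℚ) :
    @IsOpen ℚ (TopologicalSpace.induced (algebraMap ℚ (FiniteAdeleRing ℤ ℚ)) inferInstance)
      {y : ℚ | ∃ n : ℤ, y = x + n * t} := by
  simpa only [eq_intCast] using FiniteAdeleRing.isOpen_setOf_add_mul_induced (R := ℤ) ht x
end

section
/- Let u² and t be rational numbers with 0 < u² < t − 1 and let p and q be distinct primes with v_p(u²) = −1 = v_q(u²), v_p(t) ≥ 0 and v_q(t) ≥ 0. Let U = {x ∈ ℚ : x ≠ 0 and exactly one of the two conditions v_p(x) < 0, v_q(x) < 0 holds}, regarded as a subset of ℙ¹(ℚ). Then U is Δ(u²,2t)-invariant: for every γ ∈ Δ(u²,2t) and every x ∈ U, one has γ•x ∈ U. -/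
open Matrix

/-- The projective general linear group `PGL₂(ℚ)`. -/
abbrev PGL2Q : Type := GL (Fin 2) ℚ ⧸ Subgroup.center (GL (Fin 2) ℚ)

/-- The canonical projection `GL₂(ℚ) → PGL₂(ℚ)`. -/
def pgl : GL (Fin 2) ℚ →* PGL2Q := QuotientGroup.mk' (Subgroup.center (GL (Fin 2) ℚ))

/-- The Möbius action of a matrix `A ∈ GL₂(ℚ)` on `ℙ¹(ℚ) = ℚ ∪ {∞}`. -/
def moebius (A : GL (Fin 2) ℚ) (z : OnePoint ℚ) : OnePoint ℚ :=
  Option.elim z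
    (if A.val 1 0 = 0 then OnePoint.infty else ((A.val 0 0 / A.val 1 0 : ℚ) : OnePoint ℚ))
    (fun x => if A.val 1 0 * x + A.val 1 1 = 0 then OnePoint.infty
      else (((A.val 0 0 * x + A.val 0 1) / (A.val 1 0 * x + A.val 1 1) : ℚ) : OnePoint ℚ))

/-- `Δ(u²,2t)`: the subgroup of `PGL₂(ℚ)` generated by the images of the matrices
`M₁ = [[t−1, u²],[1, 1]]` and `M₂ = [[u², u²],[1, t−u²]]`. -/
def Delta (u2 t : ℚ) : Subgroup PGL2Q :=
  Subgroup.closure (pgl ''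
    {A : GL (Fin 2) ℚ | A.val = !![t - 1, u2; 1, 1] ∨ A.val = !![u2, u2; 1, t - u2]})

/-- The set `C(Γ)` of finite cusps of a subgroup `Γ ≤ PGL₂(ℚ)`: rationals fixed by a
parabolic element of `Γ` (an element `γ ≠ 1` with `tr(A)² = 4·det(A)` for a representative
`A ∈ GL₂(ℚ)`). -/
def finiteCusps (Γ : Subgroup PGL2Q) : Set ℚ :=
  {x : ℚ | ∃ A : GL (Fin 2) ℚ, pgl A ∈ Γ ∧ pgl A ≠ 1 ∧
    (A.val.trace) ^ 2 = 4 * A.val.det ∧ moebius A (x : OnePoint ℚ) = (x : OnePoint ℚ)}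

/-! ### Auxiliary lemmas -/

section ValHelpers
variable {p : ℕ} [Fact p.Prime]

lemma val_t_sub_one {t : ℚ} (ht : 1 < t) (htp : 0 ≤ padicValRat p t) :
    0 ≤ padicValRat p (t - 1) := by
  have h1 : t + (-1) ≠ 0 := by
    intro h; rw [show t + (-1) = t - 1 by ring] at h; linarith [sub_eq_zero.mp h]
  have hmin := padicValRat.min_le_padicValRat_add (p := p) (q := t) (r := -1) h1
  rw [padicValRat.neg, padicValRat.one] at hmin
  rw [show t - 1 = t + (-1) by ring]
  exact le_trans (le_min htp le_rfl) hmin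

lemma val_t_sub_u2 {u2 t : ℚ} (hu : u2 ≠ 0) (ht : t ≠ 0) (htu : t - u2 ≠ 0)
    (hup : padicValRat p u2 = -1) (htp : 0 ≤ padicValRat p t) :
    padicValRat p (t - u2) = -1 := by
  have h := padicValRat.add_eq_of_lt (p := p) (q := -u2) (r := t)
    (by rw [show -u2 + t = t - u2 by ring]; exact htu) (neg_ne_zero.mpr hu) ht
    (by rw [padicValRat.neg, hup]; linarith)
  rw [show -u2 + t = t - u2 by ring, padicValRat.neg, hup] at h
  exact h

lemma val_x_add_one_eq {x : ℚ} (hx : x ≠ 0) (hxp : padicValRat p x < 0) :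
    x + 1 ≠ 0 ∧ padicValRat p (x + 1) = padicValRat p x := by
  have hD : x + 1 ≠ 0 := by
    intro h
    have : x = -1 := by linarith
    rw [this, padicValRat.neg, padicValRat.one] at hxp
    exact lt_irrefl 0 hxp
  exact ⟨hD, padicValRat.add_eq_of_lt hD hx one_ne_zero
    (by rw [padicValRat.one]; exact hxp)⟩

lemma val_x_add_one_nonneg {x : ℚ} (hx1 : x + 1 ≠ 0) (hxp : 0 ≤ padicValRat p x) :
    0 ≤ padicValRat p (x + 1) := by
  have hmin := padicValRat.min_le_padicValRat_add (p := p) (q := x) (r := 1) hx1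
  rw [padicValRat.one] at hmin
  exact le_trans (le_min hxp le_rfl) hmin

end ValHelpers

section Keys
variable {p q : ℕ} [Fact p.Prime] [Fact q.Prime] {u2 t x : ℚ}

lemma keyM1 (h0 : 0 < u2) (h1 : u2 < t - 1)
    (hup : padicValRat p u2 = -1) (huq : padicValRat q u2 = -1)
    (htp : 0 ≤ padicValRat p t) (htq : 0 ≤ padicValRat q t)
    (hx : x ≠ 0) (hxp : padicValRat p x < 0) (hxq : 0 ≤ padicValRat q x) :
    x + 1 ≠ 0 ∧ ((t-1)*x + u2)/(x+1) ≠ 0 ∧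
      padicValRat q (((t-1)*x + u2)/(x+1)) < 0 ∧
      0 ≤ padicValRat p (((t-1)*x + u2)/(x+1)) := by
  have hu : u2 ≠ 0 := h0.ne'
  have ht1 : t - 1 ≠ 0 := (h0.trans h1).ne'
  have htgt : (1:ℚ) < t := by linarith
  have hvp_t1 : 0 ≤ padicValRat p (t - 1) := val_t_sub_one htgt htp
  have hvq_t1 : 0 ≤ padicValRat q (t - 1) := val_t_sub_one htgt htq
  obtain ⟨hD, hvpD⟩ := val_x_add_one_eq hx hxp
  have hvqD : 0 ≤ padicValRat q (x + 1) := val_x_add_one_nonneg hD hxq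
  have htx : (t-1)*x ≠ 0 := mul_ne_zero ht1 hx
  have hvq_tx : 0 ≤ padicValRat q ((t-1)*x) := by
    rw [padicValRat.mul ht1 hx]; linarith
  have hN : (t-1)*x + u2 ≠ 0 := by
    intro h
    have hx' : (t-1)*x = -u2 := by linarith
    have h2 := congrArg (padicValRat q) hx'
    rw [padicValRat.mul ht1 hx, padicValRat.neg, huq] at h2
    omega
  have hvqN : padicValRat q ((t-1)*x + u2) = -1 := by
    have h2 := padicValRat.add_eq_of_lt (p := q) (q := u2) (r := (t-1)*x)
      (by rwa [add_comm]) hu htx (by rw [huq]; linarith)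
    rw [add_comm] at h2
    rw [h2, huq]
  have hmx : padicValRat p x ≤ -1 := by omega
  have hvpN : padicValRat p x ≤ padicValRat p ((t-1)*x + u2) := by
    have hmin := padicValRat.min_le_padicValRat_add (p := p) (q := (t-1)*x) (r := u2) hN
    have h2 : padicValRat p x ≤ padicValRat p ((t-1)*x) := by
      rw [padicValRat.mul ht1 hx]; linarith
    have h3 : padicValRat p x ≤ padicValRat p u2 := by rw [hup]; exact hmx
    exact le_trans (le_min h2 h3) hmin
  refine ⟨hD, div_ne_zero hN hD, ?_, ?_⟩
  · rw [padicValRat.div hN hD, hvqN]; linarith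
  · rw [padicValRat.div hN hD, hvpD]; linarith

lemma keyM2 (h0 : 0 < u2) (h1 : u2 < t - 1)
    (hup : padicValRat p u2 = -1) (huq : padicValRat q u2 = -1)
    (htp : 0 ≤ padicValRat p t) (htq : 0 ≤ padicValRat q t)
    (hx : x ≠ 0) (hxp : padicValRat p x < 0) (hxq : 0 ≤ padicValRat q x) :
    x + (t - u2) ≠ 0 ∧ (u2*x + u2)/(x + (t - u2)) ≠ 0 ∧
      padicValRat p ((u2*x + u2)/(x + (t - u2))) < 0 ∧
      0 ≤ padicValRat q ((u2*x + u2)/(x + (t - u2))) := by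
  have hu : u2 ≠ 0 := h0.ne'
  have ht : t ≠ 0 := by intro h; rw [h] at h1; linarith
  have htu : t - u2 ≠ 0 := by intro h; linarith [sub_eq_zero.mp h]
  have hvp_tu : padicValRat p (t - u2) = -1 := val_t_sub_u2 hu ht htu hup htp
  have hvq_tu : padicValRat q (t - u2) = -1 := val_t_sub_u2 hu ht htu huq htq
  have hD : x + (t - u2) ≠ 0 := by
    intro h
    have hx' : x = -(t - u2) := by linarith
    rw [hx', padicValRat.neg, hvq_tu] at hxq
    omega
  have hvqD : padicValRat q (x + (t - u2)) = -1 := by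
    have h2 := padicValRat.add_eq_of_lt (p := q) (q := t - u2) (r := x)
      (by rwa [add_comm]) htu hx (by rw [hvq_tu]; linarith)
    rw [add_comm] at h2
    rw [h2, hvq_tu]
  have hmx : padicValRat p x ≤ -1 := by omega
  have hvpD : padicValRat p x ≤ padicValRat p (x + (t - u2)) := by
    have hmin := padicValRat.min_le_padicValRat_add (p := p) (q := x) (r := t - u2) hD
    exact le_trans (le_min le_rfl (by rw [hvp_tu]; exact hmx)) hmin
  obtain ⟨hx1, hvpx1⟩ := val_x_add_one_eq hx hxp
  have hvqx1 : 0 ≤ padicValRat q (x + 1) := val_x_add_one_nonneg hx1 hxq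
  have hN : u2*x + u2 ≠ 0 := by
    rw [show u2*x + u2 = u2*(x+1) by ring]; exact mul_ne_zero hu hx1
  have hNe : u2*x + u2 = u2*(x+1) := by ring
  refine ⟨hD, div_ne_zero hN hD, ?_, ?_⟩
  · rw [padicValRat.div hN hD, hNe, padicValRat.mul hu hx1, hup, hvpx1]
    linarith
  · rw [padicValRat.div hN hD, hNe, padicValRat.mul hu hx1, huq, hvqD]
    linarith

lemma keyM1inv (h0 : 0 < u2) (h1 : u2 < t - 1)
    (hup : padicValRat p u2 = -1) (huq : padicValRat q u2 = -1)
    (htp : 0 ≤ padicValRat p t) (htq : 0 ≤ padicValRat q t)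
    (hx : x ≠ 0) (hxp : padicValRat p x < 0) (hxq : 0 ≤ padicValRat q x) :
    t - 1 - x ≠ 0 ∧ (x - u2)/(t - 1 - x) ≠ 0 ∧
      padicValRat q ((x - u2)/(t - 1 - x)) < 0 ∧
      0 ≤ padicValRat p ((x - u2)/(t - 1 - x)) := by
  have hu : u2 ≠ 0 := h0.ne'
  have ht1 : t - 1 ≠ 0 := (h0.trans h1).ne'
  have htgt : (1:ℚ) < t := by linarith
  have hvp_t1 : 0 ≤ padicValRat p (t - 1) := val_t_sub_one htgt htp
  have hvq_t1 : 0 ≤ padicValRat q (t - 1) := val_t_sub_one htgt htq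
  have hD : t - 1 - x ≠ 0 := by
    intro h
    have hx' : x = t - 1 := by linarith
    rw [hx'] at hxp
    omega
  have hDe : t - 1 - x = -x + (t - 1) := by ring
  have hvpD : padicValRat p (t - 1 - x) = padicValRat p x := by
    have h2 := padicValRat.add_eq_of_lt (p := p) (q := -x) (r := t - 1)
      (by rw [← hDe]; exact hD) (neg_ne_zero.mpr hx) ht1
      (by rw [padicValRat.neg]; omega)
    rw [← hDe, padicValRat.neg] at h2
    exact h2
  have hvqD : 0 ≤ padicValRat q (t - 1 - x) := by
    have hmin := padicValRat.min_le_padicValRat_add (p := q) (q := -x) (r := t - 1)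
      (by rw [← hDe]; exact hD)
    rw [← hDe, padicValRat.neg] at hmin
    exact le_trans (le_min hxq hvq_t1) hmin
  have hN : x - u2 ≠ 0 := by
    intro h
    have hx' : x = u2 := by linarith
    rw [hx', huq] at hxq
    omega
  have hNe : x - u2 = -u2 + x := by ring
  have hvqN : padicValRat q (x - u2) = -1 := by
    have h2 := padicValRat.add_eq_of_lt (p := q) (q := -u2) (r := x)
      (by rw [← hNe]; exact hN) (neg_ne_zero.mpr hu) hx
      (by rw [padicValRat.neg, huq]; linarith)
    rw [← hNe, padicValRat.neg, huq] at h2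
    exact h2
  have hmx : padicValRat p x ≤ -1 := by omega
  have hvpN : padicValRat p x ≤ padicValRat p (x - u2) := by
    have hmin := padicValRat.min_le_padicValRat_add (p := p) (q := x) (r := -u2)
      (by rw [show x + -u2 = x - u2 by ring]; exact hN)
    rw [show x + -u2 = x - u2 by ring, padicValRat.neg] at hmin
    exact le_trans (le_min le_rfl (by rw [hup]; exact hmx)) hmin
  refine ⟨hD, div_ne_zero hN hD, ?_, ?_⟩
  · rw [padicValRat.div hN hD, hvqN]; linarith
  · rw [padicValRat.div hN hD, hvpD]; linarith

lemma keyM2inv (h0 : 0 < u2) (h1 : u2 < t - 1)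
    (hup : padicValRat p u2 = -1) (huq : padicValRat q u2 = -1)
    (htp : 0 ≤ padicValRat p t) (htq : 0 ≤ padicValRat q t)
    (hx : x ≠ 0) (hxp : padicValRat p x < 0) (hxq : 0 ≤ padicValRat q x) :
    u2 - x ≠ 0 ∧ ((t - u2)*x - u2)/(u2 - x) ≠ 0 ∧
      padicValRat p (((t - u2)*x - u2)/(u2 - x)) < 0 ∧
      0 ≤ padicValRat q (((t - u2)*x - u2)/(u2 - x)) := by
  have hu : u2 ≠ 0 := h0.ne'
  have ht : t ≠ 0 := by intro h; rw [h] at h1; linarith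
  have htu : t - u2 ≠ 0 := by intro h; linarith [sub_eq_zero.mp h]
  have hvp_tu : padicValRat p (t - u2) = -1 := val_t_sub_u2 hu ht htu hup htp
  have hvq_tu : padicValRat q (t - u2) = -1 := val_t_sub_u2 hu ht htu huq htq
  have hD : u2 - x ≠ 0 := by
    intro h
    have hx' : x = u2 := by linarith
    rw [hx', huq] at hxq
    omega
  have hDe : u2 - x = u2 + -x := by ring
  have hmx : padicValRat p x ≤ -1 := by omega
  have hvpD : padicValRat p x ≤ padicValRat p (u2 - x) := by
    have hmin := padicValRat.min_le_padicValRat_add (p := p) (q := u2) (r := -x)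
      (by rw [← hDe]; exact hD)
    rw [← hDe, padicValRat.neg] at hmin
    exact le_trans (le_min (by rw [hup]; exact hmx) le_rfl) hmin
  have hvqD : padicValRat q (u2 - x) = -1 := by
    have h2 := padicValRat.add_eq_of_lt (p := q) (q := u2) (r := -x)
      (by rw [← hDe]; exact hD) hu (neg_ne_zero.mpr hx)
      (by rw [padicValRat.neg, huq]; linarith)
    rw [← hDe, huq] at h2
    exact h2
  have htux : (t - u2)*x ≠ 0 := mul_ne_zero htu hx
  have hvp_tux : padicValRat p ((t - u2)*x) = -1 + padicValRat p x := by
    rw [padicValRat.mul htu hx, hvp_tu]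
  have hvq_tux : padicValRat q ((t - u2)*x) = -1 + padicValRat q x := by
    rw [padicValRat.mul htu hx, hvq_tu]
  have hN : (t - u2)*x - u2 ≠ 0 := by
    intro h
    have hx' : (t - u2)*x = u2 := by linarith
    have h2 := congrArg (padicValRat p) hx'
    rw [hvp_tux, hup] at h2
    omega
  have hNe : (t - u2)*x - u2 = (t - u2)*x + -u2 := by ring
  have hvpN : padicValRat p ((t - u2)*x - u2) = -1 + padicValRat p x := by
    have h2 := padicValRat.add_eq_of_lt (p := p) (q := (t - u2)*x) (r := -u2)
      (by rw [← hNe]; exact hN) htux (neg_ne_zero.mpr hu)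
      (by rw [padicValRat.neg, hup, hvp_tux]; omega)
    rw [← hNe] at h2
    rw [h2, hvp_tux]
  have hvqN : -1 ≤ padicValRat q ((t - u2)*x - u2) := by
    have hmin := padicValRat.min_le_padicValRat_add (p := q) (q := (t - u2)*x) (r := -u2)
      (by rw [← hNe]; exact hN)
    rw [← hNe] at hmin
    refine le_trans (le_min ?_ ?_) hmin
    · rw [hvq_tux]; omega
    · rw [padicValRat.neg, huq]
  refine ⟨hD, div_ne_zero hN hD, ?_, ?_⟩
  · rw [padicValRat.div hN hD, hvpN]; linarith [hvpD]
  · rw [padicValRat.div hN hD, hvqD]; linarith [hvqN]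

end Keys

lemma moebius_coe (A : GL (Fin 2) ℚ) (a b c d l : ℚ) (hl : l ≠ 0)
    (h : A.val = l • !![a, b; c, d]) (x : ℚ) :
    moebius A (x : OnePoint ℚ) =
      if c * x + d = 0 then OnePoint.infty else (((a*x+b)/(c*x+d) : ℚ) : OnePoint ℚ) := by
  have h00 : A.val 0 0 = l * a := by rw [h]; simp
  have h01 : A.val 0 1 = l * b := by rw [h]; simp
  have h10 : A.val 1 0 = l * c := by rw [h]; simp
  have h11 : A.val 1 1 = l * d := by rw [h]; simp
  show (if A.val 1 0 * x + A.val 1 1 = 0 then _ else _) = _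
  rw [h00, h01, h10, h11]
  rw [show l * c * x + l * d = l * (c * x + d) by ring]
  by_cases hc : c * x + d = 0
  · simp [hc]
  · rw [if_neg (by exact mul_ne_zero hl hc), if_neg hc,
      show l * a * x + l * b = l * (a * x + b) by ring, mul_div_mul_left _ _ hl]

lemma moebius_comp (A B : GL (Fin 2) ℚ) (x y : ℚ)
    (h : moebius B (x : OnePoint ℚ) = (y : OnePoint ℚ)) :
    moebius (A * B) (x : OnePoint ℚ) = moebius A (y : OnePoint ℚ) := by
  set a := A.val 0 0 with ha; set b := A.val 0 1 with hb
  set c := A.val 1 0 with hc; set d := A.val 1 1 with hd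
  set a' := B.val 0 0 with ha'; set b' := B.val 0 1 with hb'
  set c' := B.val 1 0 with hc'; set d' := B.val 1 1 with hd'
  have hAval : A.val = (1:ℚ) • !![a, b; c, d] := by
    rw [one_smul]; exact Matrix.eta_fin_two A.val
  have hABval : (A * B).val = (1:ℚ) • !![a*a' + b*c', a*b' + b*d'; c*a' + d*c', c*b' + d*d'] := by
    rw [one_smul, Units.val_mul, Matrix.eta_fin_two A.val, Matrix.eta_fin_two B.val,
      Matrix.mul_fin_two]
  have he : c' * x + d' ≠ 0 := by
    intro he
    rw [show moebius B (x : OnePoint ℚ) = if c' * x + d' = 0 then OnePoint.infty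
      else (((a'*x+b')/(c'*x+d') : ℚ) : OnePoint ℚ) from rfl, if_pos he] at h
    exact OnePoint.infty_ne_coe y h
  have hy : y = (a' * x + b') / (c' * x + d') := by
    rw [show moebius B (x : OnePoint ℚ) = if c' * x + d' = 0 then OnePoint.infty
      else (((a'*x+b')/(c'*x+d') : ℚ) : OnePoint ℚ) from rfl, if_neg he] at h
    exact (OnePoint.coe_eq_coe.mp h).symm
  rw [moebius_coe (A*B) _ _ _ _ _ one_ne_zero hABval, moebius_coe A a b c d 1 one_ne_zero hAval]
  have key : (c*a' + d*c') * x + (c*b' + d*d') = (c * y + d) * (c' * x + d') := by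
    rw [hy]; field_simp; ring
  by_cases hcy : c * y + d = 0
  · rw [if_pos (by rw [key, hcy, zero_mul]), if_pos hcy]
  · rw [if_neg (by rw [key]; exact mul_ne_zero hcy he), if_neg hcy]
    congr 1
    rw [hy]
    field_simp
    ring

lemma center_smul {c : GL (Fin 2) ℚ} (h : c ∈ Subgroup.center (GL (Fin 2) ℚ)) :
    ∃ l : ℚ, l ≠ 0 ∧ c.val = l • (1 : Matrix (Fin 2) (Fin 2) ℚ) := by
  have hdet : c.val.det ≠ 0 :=
    ((Matrix.isUnit_iff_isUnit_det c.val).mp c.isUnit).ne_zero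
  set E1 : GL (Fin 2) ℚ := ⟨!![1,1;0,1], !![1,-1;0,1],
    by rw [Matrix.mul_fin_two, Matrix.one_fin_two]; norm_num,
    by rw [Matrix.mul_fin_two, Matrix.one_fin_two]; norm_num⟩ with hE1
  set E2 : GL (Fin 2) ℚ := ⟨!![1,0;1,1], !![1,0;-1,1],
    by rw [Matrix.mul_fin_two, Matrix.one_fin_two]; norm_num,
    by rw [Matrix.mul_fin_two, Matrix.one_fin_two]; norm_num⟩ with hE2
  have h1 : E1.val * c.val = c.val * E1.val := by
    rw [← Units.val_mul, ← Units.val_mul, Subgroup.mem_center_iff.mp h E1]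
  have h2 : E2.val * c.val = c.val * E2.val := by
    rw [← Units.val_mul, ← Units.val_mul, Subgroup.mem_center_iff.mp h E2]
  rw [hE1] at h1
  rw [hE2] at h2
  rw [Matrix.eta_fin_two c.val, Matrix.mul_fin_two] at h1 h2
  simp only [Matrix.mul_fin_two] at h1 h2
  set a := c.val 0 0; set b := c.val 0 1; set cc := c.val 1 0; set d := c.val 1 1
  have e1 := congrFun (congrFun h1 0) 0
  have e2 := congrFun (congrFun h1 0) 1
  have e3 := congrFun (congrFun h2 0) 0
  simp at e1 e2 e3
  have hcc : cc = 0 := by linarith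
  have hbz : b = 0 := by linarith
  have had : d = a := by linarith
  refine ⟨a, ?_, ?_⟩
  · intro ha
    rw [Matrix.eta_fin_two c.val, Matrix.det_fin_two_of] at hdet
    apply hdet
    show a * d - b * cc = 0
    rw [hcc, hbz, had, ha]; ring
  · rw [Matrix.eta_fin_two c.val]
    show !![a, b; cc, d] = _
    rw [hcc, hbz, had]
    ext i j
    fin_cases i <;> fin_cases j <;> simp [Matrix.one_apply]

/-- The preservation property for a single element of `GL₂(ℚ)`. -/
def MPred (p q : ℕ) (C : GL (Fin 2) ℚ) : Prop :=
  ∀ y : ℚ, y ≠ 0 → Xor' (padicValRat p y < 0) (padicValRat q y < 0) →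
    ∃ w : ℚ, moebius C (y : OnePoint ℚ) = (w : OnePoint ℚ) ∧ w ≠ 0 ∧
      Xor' (padicValRat p w < 0) (padicValRat q w < 0)

lemma mpred_of (p q : ℕ) (C : GL (Fin 2) ℚ) (a b c d l : ℚ) (hl : l ≠ 0)
    (h : C.val = l • !![a, b; c, d])
    (H : ∀ y : ℚ, y ≠ 0 → Xor' (padicValRat p y < 0) (padicValRat q y < 0) →
      c * y + d ≠ 0 ∧ (a*y+b)/(c*y+d) ≠ 0 ∧
        Xor' (padicValRat p ((a*y+b)/(c*y+d)) < 0) (padicValRat q ((a*y+b)/(c*y+d)) < 0)) :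
    MPred p q C := by
  intro y hy hxor
  obtain ⟨hD, hw, hwx⟩ := H y hy hxor
  exact ⟨(a*y+b)/(c*y+d), by rw [moebius_coe C a b c d l hl h, if_neg hD], hw, hwx⟩

/-- Let `0 < u² < t − 1` and let `p ≠ q` be primes with `v_p(u²) = −1 = v_q(u²)`
and `v_p(t) ≥ 0`, `v_q(t) ≥ 0`. The set `U` of nonzero rationals `x` for which exactly one of
`v_p(x) < 0`, `v_q(x) < 0` holds, regarded as a subset of `ℙ¹(ℚ)`, is `Δ(u²,2t)`-invariant. -/
theorem xorValuationSet_delta_invariant (u2 t : ℚ) (h0 : 0 < u2) (h1 : u2 < t - 1)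
    (p q : ℕ) (hp : p.Prime) (hq : q.Prime) (hpq : p ≠ q)
    (hup : padicValRat p u2 = -1) (huq : padicValRat q u2 = -1)
    (htp : 0 ≤ padicValRat p t) (htq : 0 ≤ padicValRat q t) :
    ∀ A : GL (Fin 2) ℚ, pgl A ∈ Delta u2 t →
      ∀ z ∈ {w : OnePoint ℚ | ∃ x : ℚ, w = (x : OnePoint ℚ) ∧ x ≠ 0 ∧
          Xor' (padicValRat p x < 0) (padicValRat q x < 0)},
        moebius A z ∈ {w : OnePoint ℚ | ∃ x : ℚ, w = (x : OnePoint ℚ) ∧ x ≠ 0 ∧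
          Xor' (padicValRat p x < 0) (padicValRat q x < 0)} := by
  haveI : Fact p.Prime := ⟨hp⟩
  haveI : Fact q.Prime := ⟨hq⟩
  have hu : u2 ≠ 0 := h0.ne'
  have hdet1 : t - 1 - u2 ≠ 0 := by intro h; linarith
  have hdet2 : u2 * (t - u2) - u2 * 1 ≠ 0 := by nlinarith
  intro A hA z hz
  obtain ⟨x, rfl, hx0, hxor⟩ := hz
  set S : Set (GL (Fin 2) ℚ) :=
    {A : GL (Fin 2) ℚ | A.val = !![t - 1, u2; 1, 1] ∨ A.val = !![u2, u2; 1, t - u2]} with hSdef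
  have hA' : pgl A ∈ Subgroup.map pgl (Subgroup.closure S) := by
    rw [MonoidHom.map_closure]; exact hA
  obtain ⟨B, hB, hBA⟩ := hA'
  -- the difference between A and B is central
  have hcen : B⁻¹ * A ∈ Subgroup.center (GL (Fin 2) ℚ) := by
    rw [← QuotientGroup.ker_mk' (Subgroup.center (GL (Fin 2) ℚ)), MonoidHom.mem_ker]
    show pgl (B⁻¹ * A) = 1
    rw [_root_.map_mul, map_inv, hBA]
    group
  obtain ⟨l, hl, hc⟩ := center_smul hcen
  have hAval : A.val = l • B.val := by
    have hA2 : A = B * (B⁻¹ * A) := by group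
    rw [hA2, Units.val_mul, hc, mul_smul_comm, mul_one]
  -- every element of the closure preserves the set
  have key : ∀ C, C ∈ Subgroup.closure S → MPred p q C ∧ MPred p q C⁻¹ := by
    intro C hC
    induction hC using Subgroup.closure_induction with
    | mem g hg =>
      rcases hg with hval | hval
      · constructor
        · refine mpred_of p q g (t-1) u2 1 1 1 one_ne_zero (by rw [one_smul, hval]) ?_
          intro y hy hxor
          have he1 : (1:ℚ) * y + 1 = y + 1 := by ring
          have he2 : ((t-1)*y + u2)/((1:ℚ)*y+1) = ((t-1)*y + u2)/(y+1) := by rw [he1]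
          rw [he2, he1]
          rcases hxor with ⟨hl1, hl2⟩ | ⟨hl1, hl2⟩
          · obtain ⟨d1, d2, d3, d4⟩ := keyM1 h0 h1 hup huq htp htq hy hl1 (not_lt.mp hl2)
            exact ⟨d1, d2, Or.inr ⟨d3, not_lt.mpr d4⟩⟩
          · obtain ⟨d1, d2, d3, d4⟩ :=
              keyM1 (p := q) (q := p) h0 h1 huq hup htq htp hy hl1 (not_lt.mp hl2)
            exact ⟨d1, d2, Or.inl ⟨d3, not_lt.mpr d4⟩⟩
        · have hvalinv : (g⁻¹).val = (t - 1 - u2)⁻¹ • !![1, -u2; -1, t - 1] := by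
            rw [Matrix.coe_units_inv, hval, Matrix.inv_def, Matrix.det_fin_two_of,
              Matrix.adjugate_fin_two_of, Ring.inverse_eq_inv]
            congr 1
            ring
          refine mpred_of p q g⁻¹ 1 (-u2) (-1) (t-1) _ (inv_ne_zero hdet1) hvalinv ?_
          intro y hy hxor
          have he1 : (-1:ℚ) * y + (t - 1) = t - 1 - y := by ring
          have he2 : ((1:ℚ)*y + -u2)/((-1:ℚ)*y+(t-1)) = (y - u2)/(t - 1 - y) := by
            rw [he1]; ring_nf
          rw [he2, he1]
          rcases hxor with ⟨hl1, hl2⟩ | ⟨hl1, hl2⟩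
          · obtain ⟨d1, d2, d3, d4⟩ := keyM1inv h0 h1 hup huq htp htq hy hl1 (not_lt.mp hl2)
            exact ⟨d1, d2, Or.inr ⟨d3, not_lt.mpr d4⟩⟩
          · obtain ⟨d1, d2, d3, d4⟩ :=
              keyM1inv (p := q) (q := p) h0 h1 huq hup htq htp hy hl1 (not_lt.mp hl2)
            exact ⟨d1, d2, Or.inl ⟨d3, not_lt.mpr d4⟩⟩
      · constructor
        · refine mpred_of p q g u2 u2 1 (t - u2) 1 one_ne_zero (by rw [one_smul, hval]) ?_
          intro y hy hxor
          have he1 : (1:ℚ) * y + (t - u2) = y + (t - u2) := by ring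
          have he2 : (u2*y + u2)/((1:ℚ)*y+(t - u2)) = (u2*y + u2)/(y + (t - u2)) := by rw [he1]
          rw [he2, he1]
          rcases hxor with ⟨hl1, hl2⟩ | ⟨hl1, hl2⟩
          · obtain ⟨d1, d2, d3, d4⟩ := keyM2 h0 h1 hup huq htp htq hy hl1 (not_lt.mp hl2)
            exact ⟨d1, d2, Or.inl ⟨d3, not_lt.mpr d4⟩⟩
          · obtain ⟨d1, d2, d3, d4⟩ :=
              keyM2 (p := q) (q := p) h0 h1 huq hup htq htp hy hl1 (not_lt.mp hl2)
            exact ⟨d1, d2, Or.inr ⟨d3, not_lt.mpr d4⟩⟩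
        · have hvalinv : (g⁻¹).val = (u2 * (t - u2) - u2 * 1)⁻¹ • !![t - u2, -u2; -1, u2] := by
            rw [Matrix.coe_units_inv, hval, Matrix.inv_def, Matrix.det_fin_two_of,
              Matrix.adjugate_fin_two_of, Ring.inverse_eq_inv]
          refine mpred_of p q g⁻¹ (t - u2) (-u2) (-1) u2 _ (inv_ne_zero hdet2) hvalinv ?_
          intro y hy hxor
          have he1 : (-1:ℚ) * y + u2 = u2 - y := by ring
          have he2 : ((t - u2)*y + -u2)/((-1:ℚ)*y+u2) = ((t - u2)*y - u2)/(u2 - y) := by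
            rw [he1]; ring_nf
          rw [he2, he1]
          rcases hxor with ⟨hl1, hl2⟩ | ⟨hl1, hl2⟩
          · obtain ⟨d1, d2, d3, d4⟩ := keyM2inv h0 h1 hup huq htp htq hy hl1 (not_lt.mp hl2)
            exact ⟨d1, d2, Or.inl ⟨d3, not_lt.mpr d4⟩⟩
          · obtain ⟨d1, d2, d3, d4⟩ :=
              keyM2inv (p := q) (q := p) h0 h1 huq hup htq htp hy hl1 (not_lt.mp hl2)
            exact ⟨d1, d2, Or.inr ⟨d3, not_lt.mpr d4⟩⟩
    | one =>
      have hone : MPred p q 1 := by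
        refine mpred_of p q 1 1 0 0 1 1 one_ne_zero
          (by rw [one_smul, Units.val_one, Matrix.one_fin_two]) ?_
        intro y hy hxor
        have he1 : (0:ℚ) * y + 1 = 1 := by ring
        have he2 : ((1:ℚ)*y + 0)/((0:ℚ)*y+1) = y := by rw [he1]; ring_nf
        rw [he2, he1]
        exact ⟨one_ne_zero, hy, hxor⟩
      exact ⟨hone, by rwa [inv_one]⟩
    | mul g h hg hh ihg ihh =>
      constructor
      · intro y hy hxor
        obtain ⟨w1, e1, hw1, hx1⟩ := ihh.1 y hy hxor
        obtain ⟨w2, e2, hw2, hx2⟩ := ihg.1 w1 hw1 hx1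
        exact ⟨w2, by rw [moebius_comp g h y w1 e1]; exact e2, hw2, hx2⟩
      · rw [_root_.mul_inv_rev]
        intro y hy hxor
        obtain ⟨w1, e1, hw1, hx1⟩ := ihg.2 y hy hxor
        obtain ⟨w2, e2, hw2, hx2⟩ := ihh.2 w1 hw1 hx1
        exact ⟨w2, by rw [moebius_comp h⁻¹ g⁻¹ y w1 e1]; exact e2, hw2, hx2⟩
    | inv g hg ihg =>
      exact ⟨ihg.2, by rw [inv_inv]; exact ihg.1⟩
  -- conclude
  obtain ⟨w, hw, hw0, hwxor⟩ := (key B hB).1 x hx0 hxor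
  have hAB : moebius A (x : OnePoint ℚ) = moebius B (x : OnePoint ℚ) := by
    rw [moebius_coe A (B.val 0 0) (B.val 0 1) (B.val 1 0) (B.val 1 1) l hl
        (by rw [hAval]; congr 1; exact Matrix.eta_fin_two B.val),
      moebius_coe B (B.val 0 0) (B.val 0 1) (B.val 1 0) (B.val 1 1) 1 one_ne_zero
        (by rw [one_smul]; exact Matrix.eta_fin_two B.val)]
  exact ⟨w, by rw [hAB]; exact hw, hw0, hwxor⟩
end

section
/- For u² = 6/11 and t = 3, there exists a hyperbolic element γ of Δ(6/11, 6) (i.e. γ ≠ 1 with tr(A)² > 4·det(A) and det(A) > 0 for a matrix representative A ∈ GL₂(ℚ)) such that γ fixes the point 1/4 ∈ ℙ¹(ℚ). -/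
open Matrix

/-- `M₁` as a unit. -/
def g1 : GL (Fin 2) ℚ :=
  ⟨!![2, 6/11; 1, 1], !![11/16, -3/8; -11/16, 11/8],
    by ext i j; fin_cases i <;> fin_cases j <;>
      simp [Matrix.mul_apply, Fin.sum_univ_two] <;> norm_num,
    by ext i j; fin_cases i <;> fin_cases j <;>
      simp [Matrix.mul_apply, Fin.sum_univ_two] <;> norm_num⟩

/-- `M₂` as a unit. -/
def g2 : GL (Fin 2) ℚ :=
  ⟨!![6/11, 6/11; 1, 27/11], !![99/32, -11/16; -121/96, 11/16],
    by ext i j; fin_cases i <;> fin_cases j <;>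
      simp [Matrix.mul_apply, Fin.sum_univ_two] <;> norm_num,
    by ext i j; fin_cases i <;> fin_cases j <;>
      simp [Matrix.mul_apply, Fin.sum_univ_two] <;> norm_num⟩

lemma g1_mem : pgl g1 ∈ Delta (6 / 11) 3 := by
  apply Subgroup.subset_closure
  exact ⟨g1, Or.inl (by norm_num [g1]), rfl⟩

lemma g2_mem : pgl g2 ∈ Delta (6 / 11) 3 := by
  apply Subgroup.subset_closure
  exact ⟨g2, Or.inr (by norm_num [g2]), rfl⟩

lemma bigA_val : ((g2 * g2 * g2 * g1⁻¹ * g2⁻¹ * g1 : GL (Fin 2) ℚ) : Matrix (Fin 2) (Fin 2) ℚ)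
    = !![-2280/121, -18/11; -828/11, -795/121] := by
  show (g2.val * g2.val * g2.val * g1.inv * g2.inv * g1.val) = _
  show ((!![(6:ℚ)/11, 6/11; 1, 27/11] * !![6/11, 6/11; 1, 27/11] * !![6/11, 6/11; 1, 27/11]
    * !![11/16, -3/8; -11/16, 11/8] * !![99/32, -11/16; -121/96, 11/16]
    * !![2, 6/11; 1, 1]) : Matrix (Fin 2) (Fin 2) ℚ) = _
  ext i j
  fin_cases i <;> fin_cases j <;>
    simp [Matrix.mul_apply, Fin.sum_univ_two] <;> norm_num

/-- For `u² = 6/11` and `t = 3`, there is a hyperbolic element of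
`Δ(6/11, 6)` (an element `γ ≠ 1` with `tr(A)² > 4·det(A)` and `det(A) > 0` for a matrix
representative `A`) fixing the point `1/4 ∈ ℙ¹(ℚ)`. -/
theorem exists_hyperbolic_fixing_one_quarter :
    ∃ A : GL (Fin 2) ℚ, pgl A ∈ Delta (6 / 11) 3 ∧ pgl A ≠ 1 ∧
      (A.val.trace) ^ 2 > 4 * A.val.det ∧ 0 < A.val.det ∧
      moebius A ((1 / 4 : ℚ) : OnePoint ℚ) = ((1 / 4 : ℚ) : OnePoint ℚ) := by
  refine ⟨g2 * g2 * g2 * g1⁻¹ * g2⁻¹ * g1, ?_, ?_, ?_, ?_, ?_⟩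
  · simp only [_root_.map_mul, map_inv]
    exact Subgroup.mul_mem _ (Subgroup.mul_mem _ (Subgroup.mul_mem _ (Subgroup.mul_mem _
      (Subgroup.mul_mem _ g2_mem g2_mem) g2_mem) (Subgroup.inv_mem _ g1_mem))
      (Subgroup.inv_mem _ g2_mem)) g1_mem
  · intro h
    rw [pgl, QuotientGroup.mk'_apply, QuotientGroup.eq_one_iff] at h
    have hc := (Subgroup.mem_center_iff.mp h) g1
    have hg1 : (g1 : Matrix (Fin 2) (Fin 2) ℚ) = !![2, 6/11; 1, 1] := rfl
    have hL : ((g1 * (g2 * g2 * g2 * g1⁻¹ * g2⁻¹ * g1) : GL (Fin 2) ℚ) : Matrix (Fin 2) (Fin 2) ℚ)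
        = !![2, 6/11; 1, 1] * !![-2280/121, -18/11; -828/11, -795/121] := by
      rw [Units.val_mul, bigA_val, hg1]
    have hR : ((g2 * g2 * g2 * g1⁻¹ * g2⁻¹ * g1 * g1 : GL (Fin 2) ℚ) : Matrix (Fin 2) (Fin 2) ℚ)
        = !![-2280/121, -18/11; -828/11, -795/121] * !![2, 6/11; 1, 1] := by
      rw [Units.val_mul, bigA_val, hg1]
    have hv := hL ▸ hR ▸ congrArg Units.val hc
    have h00 := congrFun (congrFun hv 0) 0
    simp [Matrix.mul_apply, Fin.sum_univ_two] at h00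
    norm_num at h00
  · rw [bigA_val]
    norm_num [Matrix.trace_fin_two_of, Matrix.det_fin_two_of]
  · rw [bigA_val]
    norm_num [Matrix.det_fin_two_of]
  · unfold moebius
    rw [bigA_val]
    have hz : ((1/4 : ℚ) : OnePoint ℚ) = Option.some (1/4 : ℚ) := rfl
    rw [hz, Option.elim_some]
    rw [if_neg (by norm_num)]
    exact congrArg Option.some (by norm_num)
end

section
/- For u² = 6/11 and t = 3, the rational number 1/4 is not a finite cusp of Δ(6/11, 6); in particular C(Δ(6/11, 6)) ≠ ℚ. Combined with the density of C(Δ(6/11,6)) in ∏_p ℚ_p, this shows that density of the finite cusp set in the product ∏_p ℚ_p of all p-adic fields is not a sufficient condition for pseudomodularity. -/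
open Matrix

/-!
`Δ(6/11, 6)` is generated by `M₁` and `M₂`, which play ping-pong on the upper half-plane with
four closed discs and half-planes; since `i` lies outside all of them, every nontrivial element
of the group moves `i` into one of them. A parabolic element fixing `1/4` is, up to a scalar,
a unipotent `1 + q K` with `K² = 0`, and conjugation by the hyperbolic element
`H = M₁⁻¹ M₂ M₁ M₂⁻³`, which fixes `1/4` with eigenvalue ratio `1024`, replaces `q` by `q / 1024`.
For `q` small enough the unipotent moves `i` too little to reach any of the four regions.
-/

open UpperHalfPlane MatrixGroups
open scoped Function

namespace FreeGroup

variable {ι α G : Type*} [Group G] [MulAction G α] {a : ι → G} {Y : ι × Bool → Set α} {x₀ : α}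

theorem lift_mk_cons_smul_mem_of_pingPong (hdisj : Pairwise (Disjoint on Y))
    (hx₀ : ∀ p, x₀ ∉ Y p) (hpp : ∀ p x, x ∉ Y (p.1, !p.2) → lift a (mk [p]) • x ∈ Y p) :
    ∀ (L : List (ι × Bool)) (p : ι × Bool), IsReduced (p :: L) →
      lift a (mk (p :: L)) • x₀ ∈ Y p
  | [], p, _ => hpp p x₀ (hx₀ _)
  | q :: L, p, hred => by
    obtain ⟨hpq, hL⟩ := isReduced_cons_cons.mp hred
    have hq := lift_mk_cons_smul_mem_of_pingPong hdisj hx₀ hpp L q hL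
    have hne : q ≠ (p.1, !p.2) := by
      rintro rfl
      simp at hpq
    rw [← List.singleton_append, ← mul_mk, _root_.map_mul, mul_smul]
    exact hpp p _ (Set.disjoint_left.mp (hdisj hne) hq)

theorem exists_lift_smul_mem_of_pingPong [DecidableEq ι] (hdisj : Pairwise (Disjoint on Y))
    (hx₀ : ∀ p, x₀ ∉ Y p) (hpp : ∀ p x, x ∉ Y (p.1, !p.2) → lift a (mk [p]) • x ∈ Y p)
    {w : FreeGroup ι} (hw : w ≠ 1) :
    ∃ p, lift a w • x₀ ∈ Y p := by
  obtain ⟨p, L, hwL⟩ := List.exists_cons_of_ne_nil (mt toWord_eq_nil_iff.mp hw)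
  refine ⟨p, ?_⟩
  rw [← mk_toWord (x := w), hwL]
  exact lift_mk_cons_smul_mem_of_pingPong hdisj hx₀ hpp L p (hwL ▸ isReduced_toWord)

end FreeGroup

noncomputable def toPGLReal : PGL2Q →* PGL(2, ℝ) := ProjGenLinGroup.map (Rat.castHom ℝ)

/-- The value `v* Φ v` at `v = (z, 1)`; for symmetric `Φ` its sign tells on which side of a
circle or line `z` lies. -/
def hermForm (Φ : Matrix (Fin 2) (Fin 2) ℚ) (z : ℍ) : ℝ :=
  Φ 0 0 * Complex.normSq z + (Φ 0 1 + Φ 1 0) * z.re + Φ 1 1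

lemma hermForm_smul_left (c : ℚ) (Φ : Matrix (Fin 2) (Fin 2) ℚ) (z : ℍ) :
    hermForm (c • Φ) z = c * hermForm Φ z := by
  simp only [hermForm, Matrix.smul_apply, smul_eq_mul, Rat.cast_mul]
  ring

lemma hermForm_I (Φ : Matrix (Fin 2) (Fin 2) ℚ) : hermForm Φ I = ((Φ 0 0 + Φ 1 1 : ℚ) : ℝ) := by
  simp [hermForm]

lemma hermForm_smul (A : GL (Fin 2) ℚ) (Φ : Matrix (Fin 2) (Fin 2) ℚ) (z : ℍ) :
    hermForm Φ (toPGLReal (pgl A) • z) *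
        Complex.normSq (denom (GeneralLinearGroup.map (Rat.castHom ℝ) A) z) =
      hermForm (A.valᵀ * Φ * A) z := by
  set g := GeneralLinearGroup.map (Rat.castHom ℝ) A
  have hD := normSq_denom_ne_zero g z.im_ne_zero
  have hre : (toPGLReal (pgl A) • z).re = (num g z / denom g z).re := re_smul g z
  have hnormSq : Complex.normSq (toPGLReal (pgl A) • z : ℍ) =
      Complex.normSq (num g z / denom g z) := by
    rw [Complex.normSq_eq_norm_sq, Complex.normSq_eq_norm_sq]
    exact congrArg (· ^ 2) (norm_σ g _)
  rw [hermForm, hermForm, hnormSq, hre, map_div₀, Complex.div_re]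
  field_simp
  simp only [num, denom, g, Complex.normSq_apply, Matrix.mul_apply, Fin.sum_univ_two,
    Matrix.transpose_apply, GeneralLinearGroup.map_apply, eq_ratCast, Complex.ofReal_ratCast,
    Complex.add_re, Complex.mul_re, Complex.add_im, Complex.mul_im, Complex.ratCast_re,
    Complex.ratCast_im, coe_re, coe_im, Rat.cast_add, Rat.cast_mul]
  ring

lemma hermForm_smul_neg_of_transpose_mul_mul {A : GL (Fin 2) ℚ}
    {Φ Ψ : Matrix (Fin 2) (Fin 2) ℚ} {k : ℚ} (hk : 0 < k) (hA : A.valᵀ * Φ * A = -k • Ψ)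
    {z : ℍ} (hz : 0 < hermForm Ψ z) :
    hermForm Φ (toPGLReal (pgl A) • z) < 0 := by
  have hD := normSq_denom_pos (GeneralLinearGroup.map (Rat.castHom ℝ) A) z.im_ne_zero
  have h := hermForm_smul A Φ z
  rw [hA, hermForm_smul_left, Rat.cast_neg] at h
  have hk' : (0 : ℝ) < k := by exact_mod_cast hk
  nlinarith

def M₁ : GL (Fin 2) ℚ :=
  ⟨!![2, 6/11; 1, 1], !![11/16, -3/8; -11/16, 11/8],
    by rw [Matrix.one_fin_two]; norm_num [Matrix.mul_fin_two],
    by rw [Matrix.one_fin_two]; norm_num [Matrix.mul_fin_two]⟩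

def M₂ : GL (Fin 2) ℚ :=
  ⟨!![6/11, 6/11; 1, 27/11], !![99/32, -11/16; -121/96, 11/16],
    by rw [Matrix.one_fin_two]; norm_num [Matrix.mul_fin_two],
    by rw [Matrix.one_fin_two]; norm_num [Matrix.mul_fin_two]⟩

def gen (b : Bool) : GL (Fin 2) ℚ := cond b M₁ M₂

lemma Delta_eq_range_lift : Delta (6 / 11) 3 = (FreeGroup.lift fun b => pgl (gen b)).range := by
  rw [FreeGroup.range_lift_eq_closure, Delta]
  congr 1
  ext x
  simp only [Set.mem_image, Set.mem_ofPred_eq, Set.mem_range]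
  constructor
  · rintro ⟨A, hA | hA, rfl⟩
    · exact ⟨true, congrArg pgl (Units.ext (by rw [hA]; norm_num [gen, M₁]))⟩
    · exact ⟨false, congrArg pgl (Units.ext (by rw [hA]; norm_num [gen, M₂]))⟩
  · rintro ⟨b, rfl⟩
    refine ⟨gen b, ?_, rfl⟩
    cases b
    · right; norm_num [gen, M₂]
    · left; norm_num [gen, M₁]

/-- The letters `(true, true), (true, false), (false, true), (false, false)` stand for
`M₁, M₁⁻¹, M₂, M₂⁻¹`; their regions are `Re z ≥ 6/11`, `|z + 1/2| ≤ 1/2`, `|z - 3/11| ≤ 3/11`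
and `Re z ≤ -1`. -/
def regionMatrix : Bool × Bool → Matrix (Fin 2) (Fin 2) ℚ
  | (true, true) => !![0, -1/2; -1/2, 6/11]
  | (true, false) => !![1, 1/2; 1/2, 0]
  | (false, true) => !![1, -3/11; -3/11, 0]
  | (false, false) => !![0, 1/2; 1/2, 1]

def region (p : Bool × Bool) : Set ℍ := {z | hermForm (regionMatrix p) z ≤ 0}

lemma pairwise_disjoint_region : Pairwise (Disjoint on region) := by
  intro p q hpq
  refine Set.disjoint_left.mpr fun z hp hq => ?_
  have him := z.im_pos
  simp only [region, Set.mem_ofPred_eq, hermForm, Complex.normSq_apply, coe_re, coe_im] at hp hq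
  obtain ⟨_ | _, _ | _⟩ := p <;> obtain ⟨_ | _, _ | _⟩ := q <;>
    first
    | exact hpq rfl
    | (norm_num [regionMatrix] at hp hq; nlinarith [sq_nonneg z.re, mul_pos him him])

lemma I_notMem_region (p : Bool × Bool) : I ∉ region p := by
  obtain ⟨_ | _, _ | _⟩ := p <;> norm_num [region, hermForm, regionMatrix]

lemma gen_smul_mem_region (p : Bool × Bool) (z : ℍ) (hz : z ∉ region (p.1, !p.2)) :
    FreeGroup.lift (fun b => toPGLReal (pgl (gen b))) (FreeGroup.mk [p]) • z ∈ region p := by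
  simp only [region, Set.mem_ofPred_eq, not_le] at hz ⊢
  obtain ⟨_ | _, _ | _⟩ := p <;>
    simp only [FreeGroup.lift_mk, List.map_cons, List.map_nil, List.prod_cons, List.prod_nil,
      mul_one, cond_false, cond_true, gen, ← map_inv] at hz ⊢
  · refine (hermForm_smul_neg_of_transpose_mul_mul (k := 1331/576) (by norm_num) ?_ hz).le
    ext i j; fin_cases i <;> fin_cases j <;> norm_num [regionMatrix, M₂, Matrix.mul_apply]
  · refine (hermForm_smul_neg_of_transpose_mul_mul (k := 576/1331) (by norm_num) ?_ hz).le
    ext i j; fin_cases i <;> fin_cases j <;> norm_num [regionMatrix, M₂, Matrix.mul_apply]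
  · refine (hermForm_smul_neg_of_transpose_mul_mul (k := 11/16) (by norm_num) ?_ hz).le
    ext i j; fin_cases i <;> fin_cases j <;> norm_num [regionMatrix, M₁, Matrix.mul_apply]
  · refine (hermForm_smul_neg_of_transpose_mul_mul (k := 16/11) (by norm_num) ?_ hz).le
    ext i j; fin_cases i <;> fin_cases j <;> norm_num [regionMatrix, M₁, Matrix.mul_apply]

lemma exists_smul_I_mem_region {g : PGL2Q} (hg : g ∈ Delta (6 / 11) 3) (hg1 : g ≠ 1) :
    ∃ p, toPGLReal g • I ∈ region p := by
  rw [Delta_eq_range_lift] at hg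
  obtain ⟨w, rfl⟩ := hg
  have hw : w ≠ 1 := by rintro rfl; exact hg1 (map_one _)
  have hlift : toPGLReal (FreeGroup.lift (fun b => pgl (gen b)) w) =
      FreeGroup.lift (fun b => toPGLReal (pgl (gen b))) w :=
    FreeGroup.lift_unique (toPGLReal.comp _) (by simp)
  rw [hlift]
  exact FreeGroup.exists_lift_smul_mem_of_pingPong pairwise_disjoint_region I_notMem_region
    gen_smul_mem_region hw

lemma moebius_coe_eq_self {A : GL (Fin 2) ℚ} {x : ℚ} (h : moebius A x = x) :
    A 1 0 * x ^ 2 + (A 1 1 - A 0 0) * x - A 0 1 = 0 := by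
  have h' : (if A 1 0 * x + A 1 1 = 0 then OnePoint.infty
      else (((A 0 0 * x + A 0 1) / (A 1 0 * x + A 1 1) : ℚ) : OnePoint ℚ)) = x := h
  split_ifs at h' with hden
  · exact absurd h' (OnePoint.infty_ne_coe _)
  · rw [OnePoint.coe_eq_coe, div_eq_iff hden] at h'
    linear_combination -h'

/-- Its kernel and image are spanned by `(x, 1)`, so the `unipotent x q` below are the
parabolic elements fixing `x`. -/
def nilpotentAt (x : ℚ) : Matrix (Fin 2) (Fin 2) ℚ := !![x, -x ^ 2; 1, -x]

lemma nilpotentAt_mul_self (x : ℚ) : nilpotentAt x * nilpotentAt x = 0 := by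
  ext i j; fin_cases i <;> fin_cases j <;> simp [nilpotentAt, Matrix.mul_apply, sq, mul_assoc]

def unipotent (x q : ℚ) : GL (Fin 2) ℚ :=
  ⟨1 + q • nilpotentAt x, 1 - q • nilpotentAt x,
    by simp [add_mul, mul_sub, nilpotentAt_mul_self],
    by simp [sub_mul, mul_add, nilpotentAt_mul_self]⟩

lemma exists_pgl_eq_unipotent {A : GL (Fin 2) ℚ} {x : ℚ}
    (hpar : A.val.trace ^ 2 = 4 * A.val.det) (hfix : moebius A x = x) :
    ∃ q, pgl A = pgl (unipotent x q) := by
  have hdet : A.val.det ≠ 0 := ((Matrix.isUnit_iff_isUnit_det _).mp A.isUnit).ne_zero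
  have hfix' := moebius_coe_eq_self hfix
  obtain ⟨a, b, c, d, hA⟩ : ∃ a b c d, A.val = !![a, b; c, d] :=
    ⟨_, _, _, _, A.val.eta_fin_two⟩
  rw [Matrix.trace_fin_two, Matrix.det_fin_two] at hpar
  rw [Matrix.det_fin_two] at hdet
  simp only [hA, Matrix.of_apply, Matrix.cons_val', Matrix.cons_val_zero, Matrix.cons_val_one,
    Matrix.empty_val', Matrix.cons_val_fin_one] at hpar hdet hfix'
  have had : a - d = 2 * c * x := by
    have : (a - d - 2 * c * x) ^ 2 = 0 := by linear_combination hpar + 4 * c * hfix'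
    linear_combination pow_eq_zero_iff (n := 2) (by norm_num) |>.mp this
  have hb : b = -c * x ^ 2 := by linear_combination -(hfix' + x * had)
  have hs : a + d ≠ 0 := by
    intro hs
    apply hdet
    linear_combination (-(1/4) * (a - d + 2 * c * x)) * had - c * hb + (a + d) / 4 * hs
  refine ⟨2 * c / (a + d), ?_⟩
  have hA' : A = GeneralLinearGroup.scalar (Fin 2) (Units.mk0 _ (div_ne_zero hs two_ne_zero)) *
      unipotent x (2 * c / (a + d)) := by
    ext i j
    rw [hA]
    fin_cases i <;> fin_cases j <;> simp [unipotent, nilpotentAt] <;> field_simp <;> linarith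
  rw [hA', map_mul]
  exact (congrArg (· * pgl _) (ProjGenLinGroup.mk_scalar _)).trans (one_mul _)

def hyperbolic : GL (Fin 2) ℚ := M₁⁻¹ * M₂ * M₁ * M₂⁻¹ ^ 3

lemma pgl_hyperbolic_mem : pgl hyperbolic ∈ Delta (6 / 11) 3 := by
  rw [Delta_eq_range_lift]
  exact ⟨(FreeGroup.of true)⁻¹ * FreeGroup.of false * FreeGroup.of true *
    (FreeGroup.of false)⁻¹ ^ 3, by simp [hyperbolic, gen]⟩

lemma hyperbolic_mul_nilpotentAt :
    hyperbolic.val * nilpotentAt (1 / 4) =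
      (1 / 1024 : ℚ) • (nilpotentAt (1 / 4) * hyperbolic.val) := by
  simp only [hyperbolic, Units.val_mul, pow_three]
  norm_num [M₁, M₂, nilpotentAt, Matrix.mul_fin_two]

lemma hyperbolic_conj_unipotent (q : ℚ) :
    hyperbolic * unipotent (1 / 4) q * hyperbolic⁻¹ = unipotent (1 / 4) (q / 1024) := by
  rw [mul_inv_eq_iff_eq_mul]
  ext : 1
  simp only [unipotent, Units.val_mul, mul_add, add_mul, mul_one, one_mul, Matrix.mul_smul,
    Matrix.smul_mul, hyperbolic_mul_nilpotentAt, smul_smul, mul_one_div]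

lemma hyperbolic_pow_conj_unipotent (n : ℕ) (q : ℚ) :
    hyperbolic ^ n * unipotent (1 / 4) q * (hyperbolic ^ n)⁻¹ =
      unipotent (1 / 4) (q / 1024 ^ n) := by
  induction n with
  | zero => simp
  | succ n ih =>
    calc hyperbolic ^ (n + 1) * unipotent (1 / 4) q * (hyperbolic ^ (n + 1))⁻¹
        = hyperbolic * (hyperbolic ^ n * unipotent (1 / 4) q * (hyperbolic ^ n)⁻¹) *
            hyperbolic⁻¹ := by group
      _ = unipotent (1 / 4) (q / 1024 ^ (n + 1)) := by
        rw [ih, hyperbolic_conj_unipotent, pow_succ, div_div]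

lemma unipotent_smul_I_notMem_region {q : ℚ} (hq : |q| < 1 / 100) (p : Bool × Bool) :
    toPGLReal (pgl (unipotent (1 / 4) q)) • I ∉ region p := by
  have hD := normSq_denom_pos (GeneralLinearGroup.map (Rat.castHom ℝ) (unipotent (1 / 4) q))
    I.im_ne_zero
  have h := hermForm_smul (unipotent (1 / 4) q) (regionMatrix p) I
  have hpos :
      0 < hermForm ((unipotent (1 / 4) q).valᵀ * regionMatrix p * unipotent (1 / 4) q) I := by
    rw [hermForm_I, Rat.cast_pos]
    obtain ⟨hq₁, hq₂⟩ := abs_lt.mp hq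
    obtain ⟨_ | _, _ | _⟩ := p <;>
      norm_num [unipotent, nilpotentAt, regionMatrix, Matrix.mul_apply] <;> nlinarith
  simp only [region, Set.mem_ofPred_eq, not_le]
  nlinarith

/-- **Corollary 7.** For `u² = 6/11` and `t = 3`, the rational `1/4` is not a
finite cusp of `Δ(6/11, 6)`; in particular `C(Δ(6/11, 6)) ≠ ℚ`. (Together with the density of
the cusp set in `∏_p ℚ_p`, this shows that density in `∏_p ℚ_p` does not suffice for
pseudomodularity.) -/
theorem one_quarter_not_cusp_six_elevenths :
    (1 / 4 : ℚ) ∉ finiteCusps (Delta (6 / 11) 3) ∧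
      finiteCusps (Delta (6 / 11) 3) ≠ Set.univ := by
  have hquarter : (1 / 4 : ℚ) ∉ finiteCusps (Delta (6 / 11) 3) := by
    rintro ⟨A, hA, hA1, hpar, hfix⟩
    obtain ⟨q, hAq⟩ := exists_pgl_eq_unipotent hpar hfix
    obtain ⟨n, hn⟩ := pow_unbounded_of_one_lt (100 * |q|) (by norm_num : (1 : ℚ) < 1024)
    have hsmall : |q / 1024 ^ n| < 1 / 100 := by
      rw [abs_div, abs_of_pos (by positivity : (0 : ℚ) < 1024 ^ n), div_lt_iff₀ (by positivity)]
      linarith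
    set g := pgl (hyperbolic ^ n) * pgl A * (pgl (hyperbolic ^ n))⁻¹
    have hHn : pgl (hyperbolic ^ n) ∈ Delta (6 / 11) 3 :=
      map_pow pgl _ n ▸ pow_mem pgl_hyperbolic_mem n
    have hg : g ∈ Delta (6 / 11) 3 := mul_mem (mul_mem hHn hA) (inv_mem hHn)
    have hg1 : g ≠ 1 := fun h => hA1 (conj_eq_one_iff.mp h)
    have hgq : g = pgl (unipotent (1 / 4) (q / 1024 ^ n)) := by
      rw [← hyperbolic_pow_conj_unipotent, map_mul, map_mul, map_inv, ← hAq]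
    obtain ⟨p, hp⟩ := exists_smul_I_mem_region hg hg1
    exact unipotent_smul_I_notMem_region hsmall p (hgq ▸ hp)
  exact ⟨hquarter, fun h => hquarter (h ▸ Set.mem_univ _)⟩
end
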